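/- Consider a syntactically safe core-language algorithm satisfying Assumption (A), and let ψ be a decider whose round predicates imply those of the global predicate. Then: (1) if (solo, solo^?) →ψ (f',d') then (f',d') = (solo, solo); (2) if (solo^a, solo^?) →ψ (f',d') then (f',d') = (solo^a, solo^a); (3) if moreover thr_m^{1,k} ≤ thr_u^1, then for every θ ≥ thr̄, (bias(θ), solo^?) →ψ (f',d') implies (f',d') = (solo, solo), and for every θ ≤ 1 − thr̄, (bias(θ), solo^?) →ψ (f',d') implies (f',d') = (solo^a, solo^a). -/

import Mathlib

open Classical

namespace HO

/-! ### Values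

`none` is the undefined value `?`; defined values are natural numbers, where
`some 0` plays the role of `a` and `some 1` the role of `b` (so `a < b`). -/

abbrev Val := Option ℕ

def aVal : ℕ := 0
def bVal : ℕ := 1

/-! ### Operations -/

inductive Op where
  | min : Op
  | smor : Op

/-- Minimum of a multiset of defined values (`none` if the multiset is empty). -/
noncomputable def msMin (S : Multiset ℕ) : Option ℕ :=
  if h : S.toFinset.Nonempty then some (S.toFinset.min' h) else none

/-- Smallest most frequent value of a multiset (`none` if the multiset is empty). -/
noncomputable def msSmor (S : Multiset ℕ) : Option ℕ :=
  if h : (S.toFinset.filter fun v => ∀ w ∈ S.toFinset, S.count w ≤ S.count v).Nonempty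
  then some ((S.toFinset.filter fun v => ∀ w ∈ S.toFinset, S.count w ≤ S.count v).min' h)
  else none

noncomputable def Op.apply : Op → Multiset ℕ → Option ℕ
  | Op.min, S => msMin S
  | Op.smor, S => msSmor S

/-! ### Rounds

A round consists of at most one `uni` instruction followed by a list of `mult`
instructions with non-increasing thresholds, all thresholds lying in `[0,1)`. -/

structure Round where
  uniThr : Option ℝ
  mults : List (ℝ × Op)
  wfU : ∀ t ∈ uniThr, 0 ≤ t ∧ t < 1
  wfM : ∀ q ∈ mults, 0 ≤ q.1 ∧ q.1 < 1
  sorted : (mults.map Prod.fst).Chain' (· ≥ ·)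

def Round.hasUni (R : Round) : Prop := R.uniThr.isSome = true
def Round.hasMult (R : Round) : Prop := R.mults ≠ []

/-- `thr_u^i`: the threshold of the uni instruction, `-1` if absent. -/
noncomputable def Round.thrU (R : Round) : ℝ := R.uniThr.getD (-1)

noncomputable def minThr : List ℝ → ℝ
  | [] => -1
  | [t] => t
  | t :: ts => min t (minThr ts)

/-- `thr_m^{i,k}`: the smallest threshold of a mult instruction, `-1` if absent. -/
noncomputable def Round.thrM (R : Round) : ℝ := minThr (R.mults.map Prod.fst)

/-- Result of the first applicable `mult` instruction. -/
noncomputable def firstMult (n : ℕ) (S : Multiset ℕ) : List (ℝ × Op) → Option ℕ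
  | [] => none
  | (t, op) :: rest =>
      if 1 < S.toFinset.card ∧ t * n < (S.card : ℝ) then op.apply S
      else firstMult n S rest

/-- `update_i(H)`: the result of the first instruction of the round whose condition
is satisfied by `H − {?}`, and `?` (i.e. `none`) if no condition applies. -/
noncomputable def Round.update (R : Round) (n : ℕ) (H : Multiset Val) : Option ℕ :=
  if ∃ t ∈ R.uniThr,
      (H.filterMap id).toFinset.card = 1 ∧ t * n < ((H.filterMap id).card : ℝ)
  then msMin (H.filterMap id)
  else firstMult n (H.filterMap id) R.mults

/-! ### Communication predicates for a round -/

/-- A conjunction of atomic communication predicates for one round: possibly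
`φ_=` (field `eq`) and possibly `φ_thr` (field `thr`, with `0 ≤ thr < 1`). -/
structure RoundPred where
  eq : Bool
  thr : Option ℝ
  wf : ∀ t ∈ thr, 0 ≤ t ∧ t < 1

/-- `thr_i(ψ)`: the threshold appearing in the predicate, `-1` if absent. -/
noncomputable def RoundPred.thrVal (φ : RoundPred) : ℝ := φ.thr.getD (-1)

def RoundPred.isEqualizer (φ : RoundPred) : Prop := φ.eq = true

/-- Satisfaction of a round predicate by a tuple of heard-of multisets. -/
def RoundPred.sat {α : Type} (φ : RoundPred) (n : ℕ) (Hs : Fin n → Multiset α) : Prop :=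
  (φ.eq = true → ∀ p q, Hs p = Hs q) ∧
  ∀ t ∈ φ.thr, ∀ p, t * n < ((Hs p).card : ℝ)

/-- Logical implication between round predicates. -/
def RoundPred.implies (φ φ' : RoundPred) : Prop :=
  ∀ (α : Type) (n : ℕ) (Hs : Fin n → Multiset α), φ.sat n Hs → φ'.sat n Hs

/-! ### Tuples of values -/

/-- The multiset of values of a tuple. -/
def msetOf {n : ℕ} (f : Fin n → Val) : Multiset Val := Finset.univ.val.map f

def soloB (n : ℕ) : Fin n → Val := fun _ => some bVal
def soloA (n : ℕ) : Fin n → Val := fun _ => some aVal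
def soloQ (n : ℕ) : Fin n → Val := fun _ => none

/-- `bias(θ)`: a tuple over `{a,b}` with `θ·n` entries equal to `b`. -/
def isBias {n : ℕ} (θ : ℝ) (f : Fin n → Val) : Prop :=
  (∀ p, f p = some aVal ∨ f p = some bVal) ∧
  ((Finset.univ.filter fun p => f p = some bVal).card : ℝ) = θ * n

/-- `spread = bias(1/2)`. -/
def isSpread {n : ℕ} (f : Fin n → Val) : Prop := isBias (1/2) f

/-- `bias^?(θ)`: a tuple over `{?,b}` with `θ·n` entries equal to `b`. -/
def isBiasQ {n : ℕ} (θ : ℝ) (f : Fin n → Val) : Prop :=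
  (∀ p, f p = none ∨ f p = some bVal) ∧
  ((Finset.univ.filter fun p => f p = some bVal).card : ℝ) = θ * n

/-- `bias_a^?(θ)`: a tuple over `{?,a}` with `θ·n` entries equal to `a`. -/
def isBiasQa {n : ℕ} (θ : ℝ) (f : Fin n → Val) : Prop :=
  (∀ p, f p = none ∨ f p = some aVal) ∧
  ((Finset.univ.filter fun p => f p = some aVal).card : ℝ) = θ * n

/-! ### Round transitions -/

/-- Round transition `f →[φ]_i f'`: every process receives a sub-multiset of the
multiset of sent values, the tuple of heard-of multisets jointly satisfies `φ`,
and every process updates its variable accordingly. -/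
def roundTrans (R : Round) (φ : RoundPred) {n : ℕ} (f f' : Fin n → Val) : Prop :=
  ∃ Hs : Fin n → Multiset Val,
    (∀ p, Hs p ≤ msetOf f) ∧ φ.sat n Hs ∧ ∀ p, f' p = R.update n (Hs p)

/-- `d ∈ fire_i(f,φ)`. -/
def fire (R : Round) (φ : RoundPred) {n : ℕ} (f : Fin n → Val) (d : Val) : Prop :=
  ∃ f' : Fin n → Val, roundTrans R φ f f' ∧ ∃ p, f' p = d

/-! ### Algorithms -/

/-- An algorithm of the core language: rounds `1,…,r` (`r ≥ 2`), with a designated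
input-update round `ir` (`1 ≤ ir < r`). -/
structure Algo where
  r : ℕ
  rounds : ℕ → Round
  ir : ℕ
  two_le_r : 2 ≤ r
  one_le_ir : 1 ≤ ir
  ir_lt_r : ir < r

noncomputable def Algo.thrU (A : Algo) (i : ℕ) : ℝ := (A.rounds i).thrU
noncomputable def Algo.thrM (A : Algo) (i : ℕ) : ℝ := (A.rounds i).thrM
def Algo.hasUni (A : Algo) (i : ℕ) : Prop := (A.rounds i).hasUni
def Algo.hasMult (A : Algo) (i : ℕ) : Prop := (A.rounds i).hasMult

/-- A phase predicate: a conjunction of atomic predicates for every round. -/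
abbrev PhasePred := ℕ → RoundPred

/-- Phase transition `(f,d) →ψ (f',d')`. -/
def phaseTrans (A : Algo) (ψ : PhasePred) {n : ℕ} (f d f' d' : Fin n → Val) : Prop :=
  ∃ g : ℕ → Fin n → Val,
    g 0 = f ∧
    (∀ i, 1 ≤ i → i ≤ A.r → roundTrans (A.rounds i) (ψ i) (g (i - 1)) (g i)) ∧
    (∀ p, f' p = if g A.ir p = none then f p else g A.ir p) ∧
    (∀ p, d' p = if d p = none then g A.r p else d p)

/-- A chain of round transitions for rounds `k,…,l`. -/
def roundChain (A : Algo) (ψ : PhasePred) (k l : ℕ) {n : ℕ} (f f' : Fin n → Val) : Prop :=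
  ∃ g : ℕ → Fin n → Val,
    g (k - 1) = f ∧ g l = f' ∧
    ∀ i, k ≤ i → i ≤ l → roundTrans (A.rounds i) (ψ i) (g (i - 1)) (g i)

/-! ### Syntactic notions -/

/-- Round `i` is preserving w.r.t. `ψ`. -/
def Algo.preserving (A : Algo) (ψ : PhasePred) (i : ℕ) : Prop :=
  ¬ A.hasUni i ∨ ¬ A.hasMult i ∨ (ψ i).thrVal < max (A.thrU i) (A.thrM i)

/-- Round `i` is solo-safe w.r.t. `ψ`. -/
def Algo.soloSafe (A : Algo) (ψ : PhasePred) (i : ℕ) : Prop :=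
  0 ≤ A.thrU i ∧ A.thrU i ≤ (ψ i).thrVal

/-- The border threshold `thr̄ = max(1 − thr_u^1, 1 − thr_m^{1,k}/2)`. -/
noncomputable def Algo.borderThr (A : Algo) : ℝ :=
  max (1 - A.thrU 1) (1 - A.thrM 1 / 2)

/-- `ψ` is a decider: all rounds are solo-safe w.r.t. `ψ`. -/
def Algo.decider (A : Algo) (ψ : PhasePred) : Prop :=
  ∀ i, 1 ≤ i → i ≤ A.r → A.soloSafe ψ i

/-- `ψ` is a unifier. -/
def Algo.unifier (A : Algo) (ψ : PhasePred) : Prop :=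
  A.thrM 1 ≤ (ψ 1).thrVal ∧
  (A.thrU 1 ≤ (ψ 1).thrVal ∨ A.borderThr ≤ (ψ 1).thrVal) ∧
  ∃ i, 1 ≤ i ∧ i ≤ A.ir ∧ (ψ i).isEqualizer ∧
    (∀ j, 2 ≤ j → j ≤ i → ¬ A.preserving ψ j) ∧
    (∀ j, i < j → j ≤ A.ir → A.soloSafe ψ j)

/-- The algorithm is syntactically safe. -/
def Algo.syntSafe (A : Algo) : Prop :=
  A.hasMult 1 ∧
  (∀ i, 1 ≤ i → i ≤ A.r → A.hasUni i) ∧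
  (∀ q ∈ (A.rounds 1).mults, q.2 = Op.smor) ∧
  1 - A.thrU (A.ir + 1) ≤ A.thrM 1 / 2 ∧
  1 - A.thrU (A.ir + 1) ≤ A.thrU 1

/-- Assumption (A) relative to the global predicate `gl`. -/
def Algo.assumptionA (A : Algo) (gl : PhasePred) : Prop :=
  ∀ i, 1 ≤ i → i ≤ A.r →
    (∀ j, 1 ≤ j → j < i → ¬ A.preserving gl j) →
    (A.hasUni i → (gl i).thrVal ≤ A.thrU i) ∧
    (A.hasMult i → (gl i).thrVal ≤ A.thrM i)

/-- Proviso (P): the global predicate has no equalizer and round `ir+1` has no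
mult instruction. -/
def Algo.provisoP (A : Algo) (gl : PhasePred) : Prop :=
  (∀ i, 1 ≤ i → i ≤ A.r → ¬ (gl i).isEqualizer) ∧ ¬ A.hasMult (A.ir + 1)

/-- Removing all mult instructions of a round. -/
def Round.dropMults (R : Round) : Round :=
  { uniThr := R.uniThr, mults := [], wfU := R.wfU,
    wfM := by simp, sorted := by first | exact List.IsChain.nil | exact List.chain'_nil | simp [List.Chain'] }

/-- Removing all mult instructions of round `i` of an algorithm. -/
def Algo.dropMultsAt (A : Algo) (i : ℕ) : Algo :=
  { A with rounds := fun j => if j = i then (A.rounds j).dropMults else A.rounds j }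

/-! ### Communication predicates, executions, consensus -/

/-- A communication predicate `(G ψ̄) ∧ F(ψ^1 ∧ F(ψ^2 ∧ … ∧ F ψ^k))`:
a global phase predicate and sporadic phase predicates `ψ^1,…,ψ^k`. -/
structure CommPred where
  glob : PhasePred
  k : ℕ
  spor : ℕ → PhasePred

/-- Roundwise implication between phase predicates of an algorithm. -/
def predImplies (A : Algo) (ψ ψ' : PhasePred) : Prop :=
  ∀ i, 1 ≤ i → i ≤ A.r → (ψ i).implies (ψ' i)

/-- An execution of an algorithm respecting a communication predicate: an infinite
sequence of phase transitions under the global predicate, together with an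
increasing sequence of times at which the sporadic predicates hold. -/
structure Exec (A : Algo) (C : CommPred) (n : ℕ) where
  inp : ℕ → Fin n → Val
  dec : ℕ → Fin n → Val
  inp0 : ∀ p, inp 0 p ≠ none
  dec0 : ∀ p, dec 0 p = none
  step : ∀ s, phaseTrans A C.glob (inp s) (dec s) (inp (s + 1)) (dec (s + 1))
  sporTime : ℕ → ℕ
  mono : StrictMono sporTime
  sporStep : ∀ i, 1 ≤ i → i ≤ C.k →
    phaseTrans A (C.spor i) (inp (sporTime i)) (dec (sporTime i))
      (inp (sporTime i + 1)) (dec (sporTime i + 1))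

/-- Agreement: in every reachable state, any two non-`?` decision values coincide. -/
def Agreement (A : Algo) (C : CommPred) : Prop :=
  ∀ n, 0 < n → ∀ E : Exec A C n, ∀ s p q v w,
    E.dec s p = some v → E.dec s q = some w → v = w

/-- Termination: every execution reaches a state where all processes have decided. -/
def Termination (A : Algo) (C : CommPred) : Prop :=
  ∀ n, 0 < n → ∀ E : Exec A C n, ∃ s, ∀ p, E.dec s p ≠ none

/-- Solving consensus: agreement and termination. -/
def SolvesConsensus (A : Algo) (C : CommPred) : Prop :=
  Agreement A C ∧ Termination A C

end HO

/-! Under a decider every process hears more than `thr_u^i·n` values in round `i`, so from a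
constant configuration the uni instruction fires everywhere and the configuration stays
constant for the rest of the phase; this fixes `inp` at round `ir` and `dec` at round `r`.
It thus suffices that round 1 already outputs a constant configuration. Starting from
`bias(θ)` with `θ` beyond the border threshold, the minority value occurs at most
`thr_m^{1,k}/2·n` times, whereas every heard multiset has more than
`thr_u^1·n ≥ thr_m^{1,k}·n` elements: so the majority value is either alone, and the uni
instruction outputs it, or a strict majority, and a (smor) mult instruction outputs it. -/

lemma Multiset.card_eq_count_add_count {α : Type*} [DecidableEq α] {S : Multiset α} {w l : α}
    (hwl : w ≠ l) (hS : ∀ x ∈ S, x = w ∨ x = l) :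
    Multiset.card S = S.count w + S.count l := by
  rw [Multiset.card_eq_countP_add_countP (w = ·) S, Multiset.count, Multiset.count]
  congr 1
  refine Multiset.countP_congr rfl fun x hx => ?_
  rcases hS x hx with rfl | rfl <;> simp [hwl, Ne.symm hwl]

lemma Multiset.exists_eq_map_some {α : Type*} {H : Multiset (Option α)} (hH : none ∉ H) :
    ∃ S : Multiset α, H = S.map some := by
  induction H using Multiset.induction_on with
  | empty => exact ⟨0, rfl⟩
  | cons x H ih =>
    obtain ⟨y, rfl⟩ := Option.ne_none_iff_exists'.mp fun h => hH (h ▸ Multiset.mem_cons_self _ _)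
    obtain ⟨S, rfl⟩ := ih fun h => hH (Multiset.mem_cons_of_mem h)
    exact ⟨y ::ₘ S, by simp⟩

namespace HO

lemma msMin_of_forall_eq {S : Multiset ℕ} {v : ℕ} (hS : ∀ x ∈ S, x = v) (hv : S ≠ 0) :
    msMin S = some v := by
  have : S.toFinset = {v} := by
    rw [Multiset.eq_replicate_card.mpr hS, Multiset.toFinset_replicate,
      if_neg (Multiset.card_pos.mpr hv).ne']
  simp [msMin, this]

lemma msSmor_of_count_lt {S : Multiset ℕ} {w : ℕ} (hw : w ∈ S)
    (hmaj : ∀ u ∈ S, u ≠ w → S.count u < S.count w) : msSmor S = some w := by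
  have hset : (S.toFinset.filter fun v => ∀ u ∈ S.toFinset, S.count u ≤ S.count v) = {w} := by
    ext v
    simp only [Finset.mem_filter, Finset.mem_singleton, Multiset.mem_toFinset]
    constructor
    · rintro ⟨hv, hall⟩
      by_contra hvw
      exact (hmaj v hv hvw).not_ge (hall w hw)
    · rintro rfl
      refine ⟨hw, fun u hu => ?_⟩
      rcases eq_or_ne u v with rfl | h
      · exact le_rfl
      · exact (hmaj u hu h).le
  simp only [msSmor, hset, dif_pos (Finset.singleton_nonempty w), Finset.min'_singleton]

lemma minThr_mem : ∀ L : List ℝ, L ≠ [] → minThr L ∈ L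
  | [t], _ => by simp [minThr]
  | t :: t' :: ts, _ => by
    have := minThr_mem (t' :: ts) (List.cons_ne_nil _ _)
    rcases min_choice t (minThr (t' :: ts)) with h | h <;>
      simp_all [minThr]

lemma Round.exists_mem_mults_fst_eq_thrM {R : Round} (hm : R.hasMult) :
    ∃ q ∈ R.mults, q.1 = R.thrM :=
  List.mem_map.mp (minThr_mem _ (by simpa [Round.hasMult] using hm))

lemma Round.uniThr_eq_some {R : Round} (h : 0 ≤ R.thrU) : R.uniThr = some R.thrU := by
  cases hu : R.uniThr <;> simp_all [Round.thrU]
  linarith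

lemma firstMult_eq_msSmor (n : ℕ) {S : Multiset ℕ} (hS : 1 < S.toFinset.card) :
    ∀ {L : List (ℝ × Op)}, (∀ q ∈ L, q.2 = Op.smor) →
      (∃ q ∈ L, q.1 * n < (Multiset.card S : ℝ)) → firstMult n S L = msSmor S
  | [], _, hex => by simp at hex
  | (t, op) :: L, hsm, hex => by
    rw [firstMult]
    split_ifs with h
    · obtain rfl : op = Op.smor := hsm (t, op) List.mem_cons_self
      rfl
    · refine firstMult_eq_msSmor n hS (fun q hq => hsm q (List.mem_cons_of_mem _ hq)) ?_
      obtain ⟨q, hq, hlt⟩ := hex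
      rcases List.mem_cons.mp hq with rfl | hq
      · exact absurd ⟨hS, hlt⟩ h
      · exact ⟨q, hq, hlt⟩

section Update

variable {R : Round} {n : ℕ} {S : Multiset ℕ}

lemma Round.update_map_some_of_forall_eq {v : ℕ} (h0 : 0 ≤ R.thrU)
    (hS : ∀ x ∈ S, x = v) (hcard : R.thrU * n < Multiset.card S) :
    R.update n (S.map some) = some v := by
  have hS0 : S ≠ 0 := by
    rintro rfl
    simp at hcard
    linarith [mul_nonneg h0 n.cast_nonneg]
  have huni : S.toFinset.card = 1 := by
    rw [Multiset.eq_replicate_card.mpr hS, Multiset.toFinset_replicate,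
      if_neg (Multiset.card_pos.mpr hS0).ne', Finset.card_singleton]
  rw [Round.update, Multiset.filterMap_map, Function.id_comp, Multiset.filterMap_some,
    if_pos ⟨R.thrU, R.uniThr_eq_some h0, huni, hcard⟩, msMin_of_forall_eq hS hS0]

lemma Round.update_map_some_of_minority {w l : ℕ} (hwl : w ≠ l) (h0 : 0 ≤ R.thrU)
    (hm : R.hasMult) (hsm : ∀ q ∈ R.mults, q.2 = Op.smor) (hMU : R.thrM ≤ R.thrU)
    (hS : ∀ x ∈ S, x = w ∨ x = l) (hcard : R.thrU * n < Multiset.card S)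
    (hl : 2 * (S.count l : ℝ) ≤ R.thrM * n) :
    R.update n (S.map some) = some w := by
  have hn := n.cast_nonneg (α := ℝ)
  have hsplit : (Multiset.card S : ℝ) = S.count w + S.count l := by
    exact_mod_cast Multiset.card_eq_count_add_count hwl hS
  have hMU' : R.thrM * n ≤ R.thrU * n := mul_le_mul_of_nonneg_right hMU hn
  by_cases hl0 : S.count l = 0
  · refine R.update_map_some_of_forall_eq h0 (fun x hx => ?_) hcard
    rcases hS x hx with rfl | rfl
    · rfl
    · exact absurd (Multiset.count_pos.mpr hx) (by omega)
  have hlw : S.count l < S.count w := by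
    have : (S.count l : ℝ) < S.count w := by linarith
    exact_mod_cast this
  have hwS : w ∈ S := Multiset.count_pos.mp (by omega)
  have hlS : l ∈ S := Multiset.count_pos.mp (Nat.pos_of_ne_zero hl0)
  have htwo : 1 < S.toFinset.card :=
    Finset.one_lt_card.mpr ⟨w, by simpa using hwS, l, by simpa using hlS, hwl⟩
  obtain ⟨q, hq, hq1⟩ := R.exists_mem_mults_fst_eq_thrM hm
  have hfire : q.1 * n < (Multiset.card S : ℝ) := by rw [hq1]; linarith
  have hnuni : ¬ ∃ t ∈ R.uniThr, S.toFinset.card = 1 ∧ t * n < (Multiset.card S : ℝ) :=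
    fun ⟨_, _, h1, _⟩ => by omega
  rw [Round.update, Multiset.filterMap_map, Function.id_comp, Multiset.filterMap_some,
    if_neg hnuni, firstMult_eq_msSmor n htwo hsm ⟨q, hq, hfire⟩]
  refine msSmor_of_count_lt hwS fun u hu huw => ?_
  rcases hS u hu with rfl | rfl
  · exact absurd rfl huw
  · exact hlw

end Update

lemma RoundPred.thr_eq_some {φ : RoundPred} (h : 0 ≤ φ.thrVal) : φ.thr = some φ.thrVal := by
  cases hφ : φ.thr <;> simp_all [RoundPred.thrVal]
  linarith

lemma RoundPred.sat.thrVal_mul_lt_card {α : Type} {φ : RoundPred} {n : ℕ}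
    {Hs : Fin n → Multiset α} (h : φ.sat n Hs) (h0 : 0 ≤ φ.thrVal) (p : Fin n) :
    φ.thrVal * n < Multiset.card (Hs p) :=
  h.2 _ (RoundPred.thr_eq_some h0) p

lemma mem_msetOf {n : ℕ} {f : Fin n → Val} {x : Val} : x ∈ msetOf f ↔ ∃ p, f p = x := by
  simp [msetOf]

lemma card_msetOf {n : ℕ} (f : Fin n → Val) : Multiset.card (msetOf f) = n := by
  simp [msetOf]

lemma count_msetOf {n : ℕ} (f : Fin n → Val) (v : Val) :
    (msetOf f).count v = (Finset.univ.filter fun p => f p = v).card := by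
  rw [msetOf, Multiset.count_map]
  exact congrArg Multiset.card (Multiset.filter_congr fun _ _ => eq_comm)

section RoundTrans

variable {R : Round} {φ : RoundPred} {n : ℕ} {f f' : Fin n → Val}

lemma eq_const_of_roundTrans {w : ℕ} (h0 : 0 ≤ φ.thrVal)
    (hup : ∀ H ≤ msetOf f, φ.thrVal * n < Multiset.card H → R.update n H = some w)
    (ht : roundTrans R φ f f') : f' = fun _ => some w := by
  obtain ⟨Hs, hle, hsat, hf'⟩ := ht
  funext p
  rw [hf' p, hup _ (hle p) (hsat.thrVal_mul_lt_card h0 p)]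

lemma exists_eq_map_some_of_le_msetOf {H : Multiset Val} (hH : H ≤ msetOf f)
    (hf : ∀ p, f p ≠ none) : ∃ S : Multiset ℕ, H = S.map some :=
  Multiset.exists_eq_map_some fun h => by
    obtain ⟨p, hp⟩ := mem_msetOf.mp (Multiset.mem_of_le hH h)
    exact hf p hp

lemma roundTrans_const {v : ℕ} (h0 : 0 ≤ R.thrU) (h1 : R.thrU ≤ φ.thrVal)
    (ht : roundTrans R φ (fun _ => some v) f') : f' = fun _ => some v := by
  refine eq_const_of_roundTrans (h0.trans h1) (fun H hH hcard => ?_) ht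
  obtain ⟨S, rfl⟩ := exists_eq_map_some_of_le_msetOf hH fun _ => Option.some_ne_none v
  refine R.update_map_some_of_forall_eq h0 (fun x hx => ?_) ?_
  · obtain ⟨_, hp⟩ := mem_msetOf.mp (Multiset.mem_of_le hH (Multiset.mem_map_of_mem some hx))
    exact (Option.some_inj.mp hp).symm
  · rw [Multiset.card_map] at hcard
    exact (mul_le_mul_of_nonneg_right h1 n.cast_nonneg).trans_lt hcard

lemma roundTrans_const_of_minority {w l : ℕ} (hwl : w ≠ l)
    (hf : ∀ p, f p = some w ∨ f p = some l) (h0 : 0 ≤ R.thrU) (h1 : R.thrU ≤ φ.thrVal)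
    (hm : R.hasMult) (hsm : ∀ q ∈ R.mults, q.2 = Op.smor) (hMU : R.thrM ≤ R.thrU)
    (hl : 2 * ((msetOf f).count (some l) : ℝ) ≤ R.thrM * n)
    (ht : roundTrans R φ f f') : f' = fun _ => some w := by
  refine eq_const_of_roundTrans (h0.trans h1) (fun H hH hcard => ?_) ht
  obtain ⟨S, rfl⟩ := exists_eq_map_some_of_le_msetOf hH fun p => by
    rcases hf p with h | h <;> simp [h]
  refine R.update_map_some_of_minority hwl h0 hm hsm hMU (fun x hx => ?_) ?_ ?_
  · obtain ⟨p, hp⟩ := mem_msetOf.mp (Multiset.mem_of_le hH (Multiset.mem_map_of_mem some hx))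
    rcases hf p with h | h <;> simp_all
  · rw [Multiset.card_map] at hcard
    exact (mul_le_mul_of_nonneg_right h1 n.cast_nonneg).trans_lt hcard
  · have hcount : S.count l ≤ (msetOf f).count (some l) := by
      rw [← Multiset.count_map_eq_count' some S (Option.some_injective ℕ)]
      exact Multiset.count_le_of_le _ hH
    exact le_trans (by gcongr) hl

end RoundTrans

lemma phaseTrans_eq_const {A : Algo} {ψ : PhasePred} (hd : A.decider ψ) {n : ℕ}
    {f f' d' : Fin n → Val} {v : ℕ}
    (h1 : ∀ f1, roundTrans (A.rounds 1) (ψ 1) f f1 → f1 = fun _ => some v)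
    (ht : phaseTrans A ψ f (soloQ n) f' d') :
    f' = (fun _ => some v) ∧ d' = fun _ => some v := by
  obtain ⟨g, rfl, hstep, hf', hd'⟩ := ht
  have hr := A.two_le_r
  have hg : ∀ i, 1 ≤ i → i ≤ A.r → g i = fun _ => some v := by
    intro i hi
    induction i, hi using Nat.le_induction with
    | base => exact fun _ => h1 _ (hstep 1 le_rfl (by omega))
    | succ i hi ih =>
      intro hir
      have hstep := hstep (i + 1) (by omega) hir
      rw [Nat.add_sub_cancel, ih (by omega)] at hstep
      exact roundTrans_const (hd _ (by omega) hir).1 (hd _ (by omega) hir).2 hstep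
  constructor <;> funext p
  · simp [hf', hg A.ir A.one_le_ir A.ir_lt_r.le]
  · simp [hd', soloQ, hg A.r (by omega) le_rfl]

lemma isBias.count_b {n : ℕ} {θ : ℝ} {f : Fin n → Val} (hf : isBias θ f) :
    ((msetOf f).count (some bVal) : ℝ) = θ * n := by
  rw [count_msetOf, hf.2]

lemma isBias.count_a {n : ℕ} {θ : ℝ} {f : Fin n → Val} (hf : isBias θ f) :
    ((msetOf f).count (some aVal) : ℝ) = (1 - θ) * n := by
  have hsplit : (n : ℝ) = (msetOf f).count (some aVal) + (msetOf f).count (some bVal) := by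
    conv_lhs => rw [← card_msetOf f]
    exact_mod_cast Multiset.card_eq_count_add_count (by decide) fun x hx => by
      obtain ⟨p, rfl⟩ := mem_msetOf.mp hx
      exact hf.1 p
  linarith [hf.count_b]

theorem decider_phase_general (A : Algo) (ψ : PhasePred)
    (hs : A.syntSafe)
    (hd : A.decider ψ) :
    (∀ n : ℕ, 0 < n → ∀ f' d' : Fin n → Val,
        phaseTrans A ψ (soloB n) (soloQ n) f' d' → f' = soloB n ∧ d' = soloB n) ∧
    (∀ n : ℕ, 0 < n → ∀ f' d' : Fin n → Val,
        phaseTrans A ψ (soloA n) (soloQ n) f' d' → f' = soloA n ∧ d' = soloA n) ∧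
    (A.thrM 1 ≤ A.thrU 1 →
      (∀ θ : ℝ, A.borderThr ≤ θ → ∀ n : ℕ, 0 < n → ∀ f f' d' : Fin n → Val,
          isBias θ f → phaseTrans A ψ f (soloQ n) f' d' →
          f' = soloB n ∧ d' = soloB n) ∧
      (∀ θ : ℝ, θ ≤ 1 - A.borderThr → ∀ n : ℕ, 0 < n → ∀ f f' d' : Fin n → Val,
          isBias θ f → phaseTrans A ψ f (soloQ n) f' d' →
          f' = soloA n ∧ d' = soloA n)) := by
  obtain ⟨hm, -, hsm, -, -⟩ := hs
  obtain ⟨h0, h1⟩ := hd 1 le_rfl (by have := A.two_le_r; omega)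
  have hborder : 1 - A.thrM 1 / 2 ≤ A.borderThr := le_max_right _ _
  refine ⟨fun n _ f' d' ht => phaseTrans_eq_const hd (fun _ => roundTrans_const h0 h1) ht,
    fun n _ f' d' ht => phaseTrans_eq_const hd (fun _ => roundTrans_const h0 h1) ht,
    fun hMU => ⟨fun θ hθ n _ f f' d' hf ht => ?_, fun θ hθ n _ f f' d' hf ht => ?_⟩⟩
  · refine phaseTrans_eq_const hd (fun _ => roundTrans_const_of_minority (by decide)
      (fun p => (hf.1 p).symm) h0 h1 hm hsm hMU ?_) ht
    rw [hf.count_a, ← mul_assoc]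
    exact mul_le_mul_of_nonneg_right (show 2 * (1 - θ) ≤ A.thrM 1 by linarith) n.cast_nonneg
  · refine phaseTrans_eq_const hd (fun _ => roundTrans_const_of_minority (by decide)
      hf.1 h0 h1 hm hsm hMU ?_) ht
    rw [hf.count_b, ← mul_assoc]
    exact mul_le_mul_of_nonneg_right (show 2 * θ ≤ A.thrM 1 by linarith) n.cast_nonneg

/-- Lemma 15.  Consider a syntactically safe core-language
algorithm satisfying Assumption (A), and a decider `ψ` whose round predicates
imply those of the global predicate `gl`.  Then (1) from `(solo, solo^?)` the
only phase transition leads to `(solo, solo)`; (2) from `(solo^a, solo^?)` it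
leads to `(solo^a, solo^a)`; and (3) if moreover `thr_m^{1,k} ≤ thr_u^1`, then
from `(bias(θ), solo^?)` with `θ ≥ thr̄` it leads to `(solo, solo)` and with
`θ ≤ 1 − thr̄` it leads to `(solo^a, solo^a)`. -/
theorem decider_phase (A : Algo) (gl ψ : PhasePred)
    (hs : A.syntSafe) (hA : A.assumptionA gl)
    (himp : predImplies A ψ gl)
    (hd : A.decider ψ) :
    (∀ n : ℕ, 0 < n → ∀ f' d' : Fin n → Val,
        phaseTrans A ψ (soloB n) (soloQ n) f' d' → f' = soloB n ∧ d' = soloB n) ∧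
    (∀ n : ℕ, 0 < n → ∀ f' d' : Fin n → Val,
        phaseTrans A ψ (soloA n) (soloQ n) f' d' → f' = soloA n ∧ d' = soloA n) ∧
    (A.thrM 1 ≤ A.thrU 1 →
      (∀ θ : ℝ, A.borderThr ≤ θ → ∀ n : ℕ, 0 < n → ∀ f f' d' : Fin n → Val,
          isBias θ f → phaseTrans A ψ f (soloQ n) f' d' →
          f' = soloB n ∧ d' = soloB n) ∧
      (∀ θ : ℝ, θ ≤ 1 - A.borderThr → ∀ n : ℕ, 0 < n → ∀ f f' d' : Fin n → Val,
          isBias θ f → phaseTrans A ψ f (soloQ n) f' d' →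
          f' = soloA n ∧ d' = soloA n)) :=
  decider_phase_general A ψ hs hd

end HO
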